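/- There exists a countably infinite topological space Y (the lower-set topology of a countable poset in which every element has finite height) such that Y is contractible, the homeomorphism group of Y is isomorphic to the symmetric group on a countably infinite set, and any two homeomorphisms of Y are isotopic if and only if they are equal; in particular the mapping class group of Y is isomorphic to Sym(ℕ). -/

import Mathlib

/-!
Take `Y` to be an infinite antichain `ℕ` with a bottom point `⊥` adjoined, with the Alexandrov
topology whose open sets are the lower sets. For such topologies continuity is monotonicity, so
the homeomorphisms of `Y` are its order automorphisms; these fix `⊥` and permute the rest freely.
Collapsing everything onto `⊥` at every positive time is continuous because `⊥` lies in every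
nonempty open set, so `Y` is contractible. An isotopy moves a point along a path of points of the
same finite height; as `Iic x` is the smallest neighbourhood of `x` and height is strictly
monotone, such a path is locally constant, hence constant on `[0,1]`.
-/

open unitInterval

/-- An isotopy between homeomorphisms `f` and `g` of `X`: a continuous map
`H : X × [0,1] → X` with `H(·,0) = f`, `H(·,1) = g`, and `H(·,t)` a
homeomorphism for every `t`. -/
def Isotopy {X : Type*} [TopologicalSpace X] (f g : X ≃ₜ X) : Prop :=
  ∃ H : X × I → X, Continuous H ∧
    (∀ x, H (x, 0) = f x) ∧
    (∀ x, H (x, 1) = g x) ∧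
    ∀ t : I, ∃ h : X ≃ₜ X, ∀ x, H (x, t) = h x

open Filter Set Topology Order

theorem Isotopy.refl {X : Type*} [TopologicalSpace X] (f : X ≃ₜ X) : Isotopy f f :=
  ⟨fun p => f p.1, f.continuous.comp continuous_fst, fun _ => rfl, fun _ => rfl,
    fun _ => ⟨f, fun _ => rfl⟩⟩

theorem Order.eq_of_le_of_height_le {α : Type*} [PartialOrder α] {a b : α} (hab : a ≤ b)
    (h : height b ≤ height a) (ha : height a ≠ ⊤) : a = b := by
  by_contra hne
  exact (height_strictMono (hab.lt_of_ne hne) ha.lt_top).not_ge h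

namespace Topology.IsLowerSet

variable {α X : Type*} [TopologicalSpace α] [TopologicalSpace X]

section Preorder

variable [Preorder α] [Topology.IsLowerSet α]

theorem continuous_iff_eventually_le {f : X → α} :
    Continuous f ↔ ∀ x, ∀ᶠ y in 𝓝 x, f y ≤ f x := by
  simp only [continuous_iff_continuousAt, ContinuousAt, nhds_eq_principal_Iic, tendsto_principal,
    mem_Iic]

def homeomorphMulEquivOrderIso : (α ≃ₜ α) ≃* (α ≃o α) where
  toFun f := f.toEquiv.toOrderIso (IsLowerSet.monotone_iff_continuous.2 f.continuous)
    (IsLowerSet.monotone_iff_continuous.2 f.symm.continuous)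
  invFun e :=
    { e.toEquiv with
      continuous_toFun := IsLowerSet.monotone_iff_continuous.1 e.monotone
      continuous_invFun := IsLowerSet.monotone_iff_continuous.1 e.symm.monotone }
  left_inv _ := rfl
  right_inv _ := rfl
  map_mul' _ _ := rfl

@[simp]
theorem homeomorphMulEquivOrderIso_apply (f : α ≃ₜ α) (a : α) :
    homeomorphMulEquivOrderIso f a = f a := rfl

theorem contractibleSpace [OrderBot α] : ContractibleSpace α := by
  rw [contractible_iff_id_nullhomotopic]
  let H : I × α → α := fun p => if p.1 = 0 then p.2 else ⊥
  have hH : Continuous H := by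
    rw [continuous_iff_eventually_le]
    rintro ⟨t, x⟩
    by_cases ht : t = 0
    · filter_upwards [continuous_iff_eventually_le.1 continuous_snd (t, x)] with p hp
      simp only [H, ht, if_true]
      split_ifs
      exacts [hp, bot_le]
    · filter_upwards [continuous_fst.continuousAt.eventually_ne ht] with p hp
      simp [H, hp]
  exact ⟨⊥, ⟨{ toFun := H, continuous_toFun := hH, map_zero_left := fun _ => if_pos rfl,
                map_one_left := fun _ => if_neg one_ne_zero }⟩⟩

end Preorder

section PartialOrder

variable [PartialOrder α] [Topology.IsLowerSet α]

theorem isLocallyConstant_of_height_eq {c : X → α} (hc : Continuous c) {n : ℕ∞} (hn : n ≠ ⊤)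
    (h : ∀ x, height (c x) = n) : IsLocallyConstant c := by
  rw [IsLocallyConstant.iff_eventually_eq]
  intro x
  filter_upwards [continuous_iff_eventually_le.1 hc x] with y hy
  exact eq_of_le_of_height_le hy (by rw [h, h]) (by rwa [h])

theorem eq_of_isotopy (hα : ∀ a : α, height a ≠ ⊤) {f g : α ≃ₜ α} (hfg : Isotopy f g) :
    f = g := by
  obtain ⟨H, hH, h0, h1, hHt⟩ := hfg
  choose h hh using hHt
  ext x
  have hc : IsLocallyConstant fun t => H (x, t) :=
    isLocallyConstant_of_height_eq (hH.comp (Continuous.prodMk_right x)) (hα x) fun t => by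
      rw [hh, ← homeomorphMulEquivOrderIso_apply, height_orderIso]
  rw [← h0, ← h1]
  exact hc.apply_eq_of_preconnectedSpace 0 1

theorem isotopy_iff_eq (hα : ∀ a : α, height a ≠ ⊤) {f g : α ≃ₜ α} : Isotopy f g ↔ f = g :=
  ⟨eq_of_isotopy hα, fun h => h ▸ Isotopy.refl f⟩

end PartialOrder

end Topology.IsLowerSet

namespace OrderIso

variable {α β : Type*} [PartialOrder α] [PartialOrder β]

theorem withBotCongr_injective :
    Function.Injective (withBotCongr : (α ≃o β) → (WithBot α ≃o WithBot β)) := by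
  intro e₁ e₂ h
  ext a
  exact WithBot.coe_injective (congrArg (· (a : WithBot α)) h)

theorem withBotCongr_surjective :
    Function.Surjective (withBotCongr : (α ≃o β) → (WithBot α ≃o WithBot β)) := by
  intro f
  let e : α ≃ β := Equiv.removeNone f.toEquiv
  have he (a : α) : f a = e a :=
    (Equiv.removeNone_some _ (Option.ne_none_iff_exists'.1 (show f a ≠ ⊥ by simp))).symm
  refine ⟨{ e with map_rel_iff' := fun {a b} => ?_ }, ?_⟩
  · rw [← WithBot.coe_le_coe, ← he, ← he, f.le_iff_le, WithBot.coe_le_coe]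
  · ext x
    cases x using WithBot.recBotCoe with
    | bot => simp
    | coe a => exact (he a).symm

def withBotCongrHom : (α ≃o α) →* (WithBot α ≃o WithBot α) where
  toFun := withBotCongr
  map_one' := withBotCongr_refl
  map_mul' e₁ e₂ := withBotCongr_trans e₂ e₁

noncomputable def withBotCongrMulEquiv : (α ≃o α) ≃* (WithBot α ≃o WithBot α) :=
  MulEquiv.ofBijective withBotCongrHom ⟨withBotCongr_injective, withBotCongr_surjective⟩

end OrderIso

def WithDiscreteOrder (α : Type*) : Type _ := α

namespace WithDiscreteOrder

variable {α : Type*}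

instance : PartialOrder (WithDiscreteOrder α) where
  le := Eq
  le_refl := Eq.refl
  le_trans _ _ _ := Eq.trans
  le_antisymm _ _ h _ := h

theorem isMin (a : WithDiscreteOrder α) : IsMin a := fun _ h => h.symm

theorem height_withBot_ne_top (a : WithBot (WithDiscreteOrder α)) : height a ≠ ⊤ := by
  cases a using WithBot.recBotCoe with
  | bot => simp
  | coe a => simp [height_coe_withBot, height_eq_zero.2 (isMin a)]

def permMulEquivOrderIso : Equiv.Perm α ≃* (WithDiscreteOrder α ≃o WithDiscreteOrder α) where
  toFun p := Equiv.toOrderIso (α := WithDiscreteOrder α) (β := WithDiscreteOrder α) p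
    (fun _ _ h => congrArg p h) (fun _ _ h => congrArg p.symm h)
  invFun e := e.toEquiv
  left_inv _ := rfl
  right_inv _ := rfl
  map_mul' _ _ := rfl

end WithDiscreteOrder

/-- There is a countably infinite, contractible topological space
`Y` (the lower-set topology of a countable poset all of whose elements have
finite height) whose homeomorphism group is isomorphic to `Sym(ℕ)` and in which
two homeomorphisms are isotopic iff they are equal; in particular the mapping
class group of `Y` is `Sym(ℕ)`. -/
theorem stmt_12 :
    ∃ (Y : Type) (_ : PartialOrder Y) (_ : TopologicalSpace Y),
      Countable Y ∧ Infinite Y ∧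
      (∀ s : Set Y, IsOpen s ↔ IsLowerSet s) ∧
      (∀ a : Y, Order.height a ≠ ⊤) ∧
      ContractibleSpace Y ∧
      (∃ e : (Y ≃ₜ Y) ≃ Equiv.Perm ℕ, ∀ f g : Y ≃ₜ Y, e (g.trans f) = e f * e g) ∧
      (∀ f g : Y ≃ₜ Y, Isotopy f g ↔ f = g) := by
  let Y := WithBot (WithDiscreteOrder ℕ)
  let _ : TopologicalSpace Y := Topology.lowerSet Y
  let e : (Y ≃ₜ Y) ≃* Equiv.Perm ℕ := IsLowerSet.homeomorphMulEquivOrderIso.trans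
    (WithDiscreteOrder.permMulEquivOrderIso.trans OrderIso.withBotCongrMulEquiv).symm
  exact ⟨Y, inferInstance, inferInstance,
    inferInstanceAs (Countable (Option ℕ)), inferInstanceAs (Infinite (Option ℕ)),
    fun _ => IsLowerSet.isOpen_iff_isLowerSet,
    WithDiscreteOrder.height_withBot_ne_top,
    IsLowerSet.contractibleSpace,
    ⟨e.toEquiv, fun f g => map_mul e f g⟩,
    fun _ _ => IsLowerSet.isotopy_iff_eq WithDiscreteOrder.height_withBot_ne_top⟩
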